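/- Fix d ≥ 1. Define L₀ : ℝ^d → ℝ̄ by L₀(x) = sup_{y ∈ ℝ^d} ( ⟨x,y⟩ − max_{l ∈ {0,1,…,d}} ( ‖y‖_(l) − l ) ). Then L₀ is a proper convex lower semicontinuous function on ℝ^d, and the ℓ0 pseudonorm coincides with L₀ on the Euclidean unit sphere: ℓ0(x) = L₀(x) for every x ∈ ℝ^d with ‖x‖ = 1. -/

import Mathlib

noncomputable section

variable {d : ℕ}

/-- The projection `x_K` of `x` onto the coordinates in `K`
(the components outside `K` vanish). -/
def restr (K : Finset (Fin d)) (x : EuclideanSpace ℝ (Fin d)) : EuclideanSpace ℝ (Fin d) :=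
  WithLp.toLp 2 (fun i => if i ∈ K then x i else 0)

/-- The 2-k-symmetric gauge norm `‖y‖_(k) = sup {‖y_K‖ : |K| ≤ k}`
(equal to `0` for `k = 0`, by the convention `‖·‖_(0) = 0`). -/
def gaugeNorm (k : ℕ) (y : EuclideanSpace ℝ (Fin d)) : ℝ :=
  ⨆ K : {K : Finset (Fin d) // K.card ≤ k}, ‖restr (K : Finset (Fin d)) y‖

/-- The ℓ₀ pseudonorm: the number of nonzero components. -/
def l0 (x : EuclideanSpace ℝ (Fin d)) : ℕ :=
  (Finset.univ.filter fun i => x i ≠ 0).card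

open Classical in
/-- The Capra coupling `¢(x,y) = ⟨x,y⟩ / ‖x‖` for `x ≠ 0`, and `¢(0,y) = 0`. -/
def capra (x y : EuclideanSpace ℝ (Fin d)) : ℝ :=
  if x = 0 then 0 else (inner ℝ x y : ℝ) / ‖x‖

/-- The Capra conjugate of ℓ₀: `y ↦ max_{0 ≤ l ≤ d} (‖y‖_(l) − l)`. -/
def capraConjL0 (y : EuclideanSpace ℝ (Fin d)) : ℝ :=
  ⨆ l : Fin (d + 1), (gaugeNorm (l : ℕ) y - ((l : ℕ) : ℝ))

/-- `L₀(x) = sup_y (⟨x,y⟩ − max_{0 ≤ l ≤ d}(‖y‖_(l) − l))`, with values in `ℝ̄ = EReal`. -/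
def L0 (x : EuclideanSpace ℝ (Fin d)) : EReal :=
  ⨆ y : EuclideanSpace ℝ (Fin d), (((inner ℝ x y : ℝ) - capraConjL0 y : ℝ) : EReal)

/-- The k-support norm: the dual norm of the 2-k-symmetric gauge norm,
`‖y‖^sp_(k) = sup {⟨x,y⟩ : ‖x‖_(k) ≤ 1}`. -/
def suppNorm (k : ℕ) (y : EuclideanSpace ℝ (Fin d)) : ℝ :=
  sSup {c : ℝ | ∃ x : EuclideanSpace ℝ (Fin d), gaugeNorm k x ≤ 1 ∧ c = (inner ℝ x y : ℝ)}

/-- The unit ball of the k-support norm, with the convention `B^sp_(0) = {0}`. -/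
def Bsp (d k : ℕ) : Set (EuclideanSpace ℝ (Fin d)) :=
  if k = 0 then {0} else {y | suppNorm k y ≤ 1}

/-- The degenerate unit sphere `S_K = {x : x_{−K} = 0 and ‖x_K‖ = 1}`. -/
def sphK (K : Finset (Fin d)) : Set (EuclideanSpace ℝ (Fin d)) :=
  {x | (∀ i, i ∉ K → x i = 0) ∧ ‖restr K x‖ = 1}

/-- The degenerate unit ball `B_K = {x : x_{−K} = 0 and ‖x_K‖ ≤ 1}`. -/
def ballK (K : Finset (Fin d)) : Set (EuclideanSpace ℝ (Fin d)) :=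
  {x | (∀ i, i ∉ K → x i = 0) ∧ ‖restr K x‖ ≤ 1}

/-!
`L₀` is the Fenchel conjugate of the real-valued function `capraConjL0`, hence a supremum of
continuous affine functions: convex, lower semicontinuous and never `⊥`; it is `≤ 0` at the
origin because the `l = 0` term makes `capraConjL0 ≥ 0`.

On the unit sphere, let `k = ℓ₀(x)`. Cauchy–Schwarz on the support of `x` gives
`⟨x, y⟩ ≤ ‖y‖_(k) ≤ capraConjL0 y + k`, so `L₀(x) ≤ k`. Conversely `‖x‖_(l) < 1` for
`l < k`, so along `y = t • x` with `t = k / (1 - ‖x‖_(k-1))` every term `t ‖x‖_(l) - l` is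
at most `t - k`, whence `⟨x, t • x⟩ - capraConjL0 (t • x) ≥ k`.
-/

open Finset

section FenchelConj

variable {E : Type*} [NormedAddCommGroup E] [InnerProductSpace ℝ E]

def fenchelConj (f : E → ℝ) (x : E) : EReal :=
  ⨆ y, ((inner ℝ x y - f y : ℝ) : EReal)

lemma le_fenchelConj (f : E → ℝ) (x y : E) :
    ((inner ℝ x y - f y : ℝ) : EReal) ≤ fenchelConj f x :=
  le_iSup (fun y => ((inner ℝ x y - f y : ℝ) : EReal)) y

lemma fenchelConj_ne_bot (f : E → ℝ) (x : E) : fenchelConj f x ≠ ⊥ :=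
  ne_bot_of_le_ne_bot (EReal.coe_ne_bot _) (le_fenchelConj f x 0)

lemma fenchelConj_zero_ne_top {f : E → ℝ} {c : ℝ} (hf : ∀ y, c ≤ f y) :
    fenchelConj f 0 ≠ ⊤ := by
  refine ne_top_of_le_ne_top (EReal.coe_ne_top (-c)) (iSup_le fun y => ?_)
  rw [inner_zero_left, EReal.coe_le_coe_iff]
  linarith [hf y]

lemma fenchelConj_combo_le (f : E → ℝ) (x z : E) {a b : ℝ} (ha : 0 ≤ a) (hb : 0 ≤ b)
    (hab : a + b = 1) :
    fenchelConj f (a • x + b • z) ≤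
      (a : EReal) * fenchelConj f x + (b : EReal) * fenchelConj f z := by
  refine iSup_le fun y => ?_
  have hsplit : inner ℝ (a • x + b • z) y - f y
      = a * (inner ℝ x y - f y) + b * (inner ℝ z y - f y) := by
    rw [inner_add_left, real_inner_smul_left, real_inner_smul_left]
    linear_combination (f y) * hab
  rw [hsplit, EReal.coe_add, EReal.coe_mul, EReal.coe_mul]
  gcongr
  · exact le_fenchelConj f x y
  · exact le_fenchelConj f z y

lemma lowerSemicontinuous_fenchelConj (f : E → ℝ) : LowerSemicontinuous (fenchelConj f) :=
  lowerSemicontinuous_iSup fun _ =>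
    (continuous_coe_real_ereal.comp
      ((continuous_id.inner continuous_const).sub continuous_const)).lowerSemicontinuous

end FenchelConj

@[simp]
lemma restr_apply (K : Finset (Fin d)) (x : EuclideanSpace ℝ (Fin d)) (i : Fin d) :
    restr K x i = if i ∈ K then x i else 0 := rfl

lemma restr_smul (K : Finset (Fin d)) (t : ℝ) (x : EuclideanSpace ℝ (Fin d)) :
    restr K (t • x) = t • restr K x := by
  ext i
  by_cases hi : i ∈ K <;> simp [hi]

lemma norm_restr_sq (K : Finset (Fin d)) (x : EuclideanSpace ℝ (Fin d)) :
    ‖restr K x‖ ^ 2 = ∑ i ∈ K, x i ^ 2 := by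
  simp [EuclideanSpace.norm_sq_eq, sq_abs, apply_ite, sum_ite_mem]

lemma norm_restr_le_norm (K : Finset (Fin d)) (x : EuclideanSpace ℝ (Fin d)) :
    ‖restr K x‖ ≤ ‖x‖ := by
  rw [EuclideanSpace.norm_eq, EuclideanSpace.norm_eq]
  gcongr with i
  by_cases hi : i ∈ K <;> simp [hi]

lemma inner_restr_support (x y : EuclideanSpace ℝ (Fin d)) :
    inner ℝ x (restr (univ.filter fun i => x i ≠ 0) y) = inner ℝ x y := by
  simp only [PiLp.inner_apply, restr_apply, mem_filter, mem_univ, true_and]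
  refine sum_congr rfl fun i _ => ?_
  by_cases hi : x i = 0 <;> simp [hi]

instance (k : ℕ) : Nonempty {K : Finset (Fin d) // K.card ≤ k} := ⟨⟨∅, by simp⟩⟩

lemma le_gaugeNorm (k : ℕ) (y : EuclideanSpace ℝ (Fin d)) {K : Finset (Fin d)}
    (hK : K.card ≤ k) : ‖restr K y‖ ≤ gaugeNorm k y :=
  le_ciSup (f := fun K : {K : Finset (Fin d) // K.card ≤ k} => ‖restr (K : Finset (Fin d)) y‖)
    (Set.finite_range _).bddAbove ⟨K, hK⟩

lemma gaugeNorm_nonneg (k : ℕ) (y : EuclideanSpace ℝ (Fin d)) : 0 ≤ gaugeNorm k y :=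
  (norm_nonneg _).trans (le_gaugeNorm k y (K := ∅) (by simp))

lemma gaugeNorm_le_norm (k : ℕ) (y : EuclideanSpace ℝ (Fin d)) : gaugeNorm k y ≤ ‖y‖ :=
  ciSup_le fun _ => norm_restr_le_norm _ _

lemma gaugeNorm_mono {k l : ℕ} (h : k ≤ l) (y : EuclideanSpace ℝ (Fin d)) :
    gaugeNorm k y ≤ gaugeNorm l y :=
  ciSup_le fun K => le_gaugeNorm l y (K.2.trans h)

lemma gaugeNorm_smul (k : ℕ) {t : ℝ} (ht : 0 ≤ t) (y : EuclideanSpace ℝ (Fin d)) :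
    gaugeNorm k (t • y) = t * gaugeNorm k y := by
  simp only [gaugeNorm, restr_smul, norm_smul, Real.norm_of_nonneg ht, Real.mul_iSup_of_nonneg ht]

lemma exists_norm_restr_eq_gaugeNorm (k : ℕ) (y : EuclideanSpace ℝ (Fin d)) :
    ∃ K : Finset (Fin d), K.card ≤ k ∧ ‖restr K y‖ = gaugeNorm k y := by
  obtain ⟨K, hK⟩ := exists_eq_ciSup_of_finite
    (f := fun K : {K : Finset (Fin d) // K.card ≤ k} => ‖restr (K : Finset (Fin d)) y‖)
  exact ⟨K, K.2, hK⟩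

lemma gaugeNorm_lt_norm {k : ℕ} {y : EuclideanSpace ℝ (Fin d)} (hk : k < l0 y) :
    gaugeNorm k y < ‖y‖ := by
  obtain ⟨K, hKk, hK⟩ := exists_norm_restr_eq_gaugeNorm k y
  obtain ⟨j, hjy, hjK⟩ : ∃ j ∈ univ.filter (fun i => y i ≠ 0), j ∉ K :=
    not_subset.mp fun h => (card_le_card h).not_gt (hKk.trans_lt hk)
  have hyj : y j ≠ 0 := (mem_filter.mp hjy).2
  rw [← hK, ← sq_lt_sq₀ (norm_nonneg _) (norm_nonneg _), norm_restr_sq,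
    EuclideanSpace.real_norm_sq_eq]
  exact sum_lt_sum_of_subset (subset_univ K) (mem_univ j) hjK (by positivity)
    fun _ _ _ => sq_nonneg _

lemma l0_le (x : EuclideanSpace ℝ (Fin d)) : l0 x ≤ d :=
  (card_filter_le _ _).trans_eq (card_fin d)

lemma inner_le_norm_mul_gaugeNorm_l0 (x y : EuclideanSpace ℝ (Fin d)) :
    inner ℝ x y ≤ ‖x‖ * gaugeNorm (l0 x) y := by
  rw [← inner_restr_support]
  exact (real_inner_le_norm _ _).trans
    (mul_le_mul_of_nonneg_left (le_gaugeNorm _ _ le_rfl) (norm_nonneg x))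

lemma le_capraConjL0 {l : ℕ} (hl : l ≤ d) (y : EuclideanSpace ℝ (Fin d)) :
    gaugeNorm l y - l ≤ capraConjL0 y :=
  le_ciSup (f := fun l : Fin (d + 1) => gaugeNorm (l : ℕ) y - ((l : ℕ) : ℝ))
    (Set.finite_range _).bddAbove ⟨l, by omega⟩

lemma capraConjL0_nonneg (y : EuclideanSpace ℝ (Fin d)) : 0 ≤ capraConjL0 y :=
  le_trans (by simpa using gaugeNorm_nonneg 0 y) (le_capraConjL0 (Nat.zero_le d) y)

lemma exists_capraConjL0_smul_le {x : EuclideanSpace ℝ (Fin d)} (hx : ‖x‖ = 1) :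
    ∃ t : ℝ, capraConjL0 (t • x) ≤ t - l0 x := by
  set k := l0 x
  set g := gaugeNorm (k - 1) x
  have hg1 : g ≤ 1 := hx ▸ gaugeNorm_le_norm _ _
  have ht : 0 ≤ k / (1 - g) := div_nonneg (Nat.cast_nonneg _) (sub_nonneg.mpr hg1)
  refine ⟨k / (1 - g), ciSup_le fun l => ?_⟩
  rw [gaugeNorm_smul _ ht]
  rcases lt_or_ge (l : ℕ) k with hlk | hkl
  · have hg : g < 1 := hx ▸ gaugeNorm_lt_norm (by omega)
    have htg : k / (1 - g) * (1 - g) = k := div_mul_cancel₀ _ (by linarith)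
    have := mul_le_mul_of_nonneg_left (gaugeNorm_mono (by omega : (l : ℕ) ≤ k - 1) x) ht
    have : (0 : ℝ) ≤ (l : ℕ) := Nat.cast_nonneg _
    linarith
  · have := mul_le_of_le_one_right ht (hx ▸ gaugeNorm_le_norm (l : ℕ) x)
    have : (k : ℝ) ≤ (l : ℕ) := by exact_mod_cast hkl
    linarith

lemma L0_le_l0 {x : EuclideanSpace ℝ (Fin d)} (hx : ‖x‖ ≤ 1) : L0 x ≤ l0 x := by
  refine iSup_le fun y => ?_
  have hgauge := le_capraConjL0 (l0_le x) y
  have hinner := (inner_le_norm_mul_gaugeNorm_l0 x y).trans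
    (mul_le_of_le_one_left (gaugeNorm_nonneg _ y) hx)
  exact_mod_cast (by linarith : inner ℝ x y - capraConjL0 y ≤ l0 x)

lemma l0_le_L0 {x : EuclideanSpace ℝ (Fin d)} (hx : ‖x‖ = 1) : (l0 x : EReal) ≤ L0 x := by
  obtain ⟨t, ht⟩ := exists_capraConjL0_smul_le hx
  have hinner : inner ℝ x (t • x) = t := by
    rw [real_inner_smul_right, real_inner_self_eq_norm_sq, hx]
    ring
  refine le_trans ?_ (le_fenchelConj capraConjL0 x (t • x))
  rw [hinner]
  exact_mod_cast (by linarith : (l0 x : ℝ) ≤ t - capraConjL0 (t • x))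

theorem L0_proper_convex_lsc_and_l0_eq_L0_on_sphere_general (d : ℕ) :
    ((∀ x : EuclideanSpace ℝ (Fin d), L0 x ≠ ⊥) ∧
      (∃ x : EuclideanSpace ℝ (Fin d), L0 x ≠ ⊤)) ∧
    (∀ x z : EuclideanSpace ℝ (Fin d), ∀ a b : ℝ, 0 ≤ a → 0 ≤ b → a + b = 1 →
        L0 (a • x + b • z) ≤ (a : EReal) * L0 x + (b : EReal) * L0 z) ∧
    LowerSemicontinuous (L0 (d := d)) ∧
    (∀ x : EuclideanSpace ℝ (Fin d), ‖x‖ = 1 → (l0 x : EReal) = L0 x) :=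
  ⟨⟨fenchelConj_ne_bot _, 0, fenchelConj_zero_ne_top capraConjL0_nonneg⟩,
    fun x z _ _ ha hb hab => fenchelConj_combo_le _ x z ha hb hab,
    lowerSemicontinuous_fenchelConj _,
    fun _ hx => le_antisymm (l0_le_L0 hx) (L0_le_l0 hx.le)⟩

/-- `L₀(x) = sup_y (⟨x,y⟩ − max_{0 ≤ l ≤ d}(‖y‖_(l) − l))` is a proper
convex lower semicontinuous function on `ℝ^d`, and ℓ₀ coincides with `L₀` on the
Euclidean unit sphere. -/
theorem L0_proper_convex_lsc_and_l0_eq_L0_on_sphere (d : ℕ) (hd : 1 ≤ d) :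
    ((∀ x : EuclideanSpace ℝ (Fin d), L0 x ≠ ⊥) ∧
      (∃ x : EuclideanSpace ℝ (Fin d), L0 x ≠ ⊤)) ∧
    (∀ x z : EuclideanSpace ℝ (Fin d), ∀ a b : ℝ, 0 ≤ a → 0 ≤ b → a + b = 1 →
        L0 (a • x + b • z) ≤ (a : EReal) * L0 x + (b : EReal) * L0 z) ∧
    LowerSemicontinuous (L0 (d := d)) ∧
    (∀ x : EuclideanSpace ℝ (Fin d), ‖x‖ = 1 → (l0 x : EReal) = L0 x) :=
  L0_proper_convex_lsc_and_l0_eq_L0_on_sphere_general d
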